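/- arXiv:2105.11652 — 3 statements merged into one kernel-verified Lean document; each statement's English description precedes it below -/
import Mathlib

section
/- Let f : ℝ^n → ℝ^n be a C¹ map and suppose there is δ > 0 such that σ(df(x)) ≥ δ for all x ∈ ℝ^n, where σ denotes the co-norm. Then ‖f(x') − f(x)‖ ≥ δ‖x' − x‖ for all x, x' ∈ ℝ^n; in particular f is injective. -/
/-!
By the inverse function theorem and the mean value inequality, `σ(df) ≥ δ` makes `f` a local
diffeomorphism whose local inverses are `δ⁻¹`-Lipschitz. Such a map lifts Lipschitz paths: a lift
cannot leave a compact ball, on which the local inverses have a common radius, so it can be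
continued in steps of fixed length. Lifting the straight-line homotopy between `f ∘ [x, x']` and the
segment `[f x, f x']`, the monodromy theorem shows that the lift of the segment starting at `x` ends
at `x'`; as this lift is `δ⁻¹ ‖f x' - f x‖`-Lipschitz, `‖x' - x‖ ≤ δ⁻¹ ‖f x' - f x‖`.
-/

noncomputable def conorm {n : ℕ}
    (A : EuclideanSpace ℝ (Fin n) →L[ℝ] EuclideanSpace ℝ (Fin n)) : ℝ :=
  sInf {y : ℝ | ∃ v : EuclideanSpace ℝ (Fin n), ‖v‖ = 1 ∧ y = ‖A v‖}

open Set Metric unitInterval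
open scoped NNReal

variable {E X : Type*}

section Lipschitz
variable [PseudoMetricSpace E] [PseudoMetricSpace X] {K : ℝ≥0}

theorem LipschitzOnWith.congr {f g : E → X} {s : Set E} (hf : LipschitzOnWith K f s)
    (h : EqOn g f s) : LipschitzOnWith K g s := fun x hx y hy => by
  rw [h hx, h hy]
  exact hf hx hy

theorem LipschitzOnWith.Icc_trans {f : ℝ → E} {a b c : ℝ} (hab : LipschitzOnWith K f (Icc a b))
    (hbc : LipschitzOnWith K f (Icc b c)) : LipschitzOnWith K f (Icc a c) := by
  refine LipschitzOnWith.of_dist_le_mul fun x hx y hy => ?_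
  wlog hxy : x ≤ y generalizing x y
  · rw [dist_comm, dist_comm x]
    exact this y hy x hx (le_of_not_ge hxy)
  rcases le_total y b with hyb | hby
  · exact hab.dist_le_mul x ⟨hx.1, hxy.trans hyb⟩ y ⟨hy.1, hyb⟩
  rcases le_total b x with hbx | hxb
  · exact hbc.dist_le_mul x ⟨hbx, hx.2⟩ y ⟨hby, hy.2⟩
  calc dist (f x) (f y) ≤ dist (f x) (f b) + dist (f b) (f y) := dist_triangle _ _ _
    _ ≤ K * dist x b + K * dist b y :=
      add_le_add (hab.dist_le_mul x ⟨hx.1, hxb⟩ b ⟨hx.1.trans hxb, le_rfl⟩)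
        (hbc.dist_le_mul b ⟨le_rfl, hby.trans hy.2⟩ y ⟨hby, hy.2⟩)
    _ = K * dist x y := by
      rw [Real.dist_eq, Real.dist_eq, Real.dist_eq, abs_of_nonpos (by linarith),
        abs_of_nonpos (by linarith), abs_of_nonpos (by linarith)]
      ring

end Lipschitz

section Lifting
variable [MetricSpace E] [MetricSpace X] {p : E → X} {K : ℝ≥0}

def HasLipschitzLocalInverses (p : E → X) (K : ℝ≥0) : Prop :=
  ∀ x, ∃ φ : OpenPartialHomeomorph E X, x ∈ φ.source ∧ ⇑φ = p ∧ LipschitzOnWith K φ.symm φ.target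

namespace HasLipschitzLocalInverses

theorem isLocalHomeomorph (hp : HasLipschitzLocalInverses p K) : IsLocalHomeomorph p :=
  fun x => let ⟨φ, hx, hφ, _⟩ := hp x; ⟨φ, hx, hφ.symm⟩

theorem exists_uniform_radius (hp : HasLipschitzLocalInverses p K) {C : Set E}
    (hC : IsCompact C) :
    ∃ r > 0, ∀ x ∈ C, ∃ φ : OpenPartialHomeomorph E X, x ∈ φ.source ∧ ⇑φ = p ∧
      LipschitzOnWith K φ.symm φ.target ∧ ball (p x) r ⊆ φ.target := by
  refine hC.induction_on ⟨1, one_pos, by simp⟩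
    (fun s t hst ⟨r, hr, ht⟩ => ⟨r, hr, fun x hx => ht x (hst hx)⟩)
    (fun s t ⟨r, hr, hs⟩ ⟨r', hr', ht⟩ => ⟨min r r', lt_min hr hr', ?_⟩) fun x _ => ?_
  · rintro x (hx | hx)
    · obtain ⟨φ, hxφ, hφp, hφK, hball⟩ := hs x hx
      exact ⟨φ, hxφ, hφp, hφK, (ball_subset_ball (min_le_left _ _)).trans hball⟩
    · obtain ⟨φ, hxφ, hφp, hφK, hball⟩ := ht x hx
      exact ⟨φ, hxφ, hφp, hφK, (ball_subset_ball (min_le_right _ _)).trans hball⟩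
  obtain ⟨φ, hx, rfl, hφK⟩ := hp x
  obtain ⟨ε, hε, hball⟩ := isOpen_iff.1 φ.open_target (φ x) (φ.map_source hx)
  refine ⟨φ.source ∩ φ ⁻¹' ball (φ x) (ε / 2), mem_nhdsWithin_of_mem_nhds
    ((φ.isOpen_inter_preimage isOpen_ball).mem_nhds ⟨hx, mem_ball_self (half_pos hε)⟩),
    ε / 2, half_pos hε, fun y hy => ⟨φ, hy.1, rfl, hφK, (ball_subset_ball' ?_).trans hball⟩⟩
  have := mem_ball.1 hy.2
  linarith

theorem exists_lift_extension {γ : ℝ → X} {L : ℝ≥0} (hγ : LipschitzWith L γ) {Γ : ℝ → E}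
    {s s' r : ℝ} (hΓ : LipschitzOnWith (K * L) Γ (Icc 0 s)) (hΓγ : EqOn (p ∘ Γ) γ (Icc 0 s))
    (hs : 0 ≤ s) (hss' : s ≤ s') (hr : L * (s' - s) < r) (φ : OpenPartialHomeomorph E X)
    (hΓφ : Γ s ∈ φ.source) (hφp : ⇑φ = p) (hφK : LipschitzOnWith K φ.symm φ.target)
    (hball : ball (p (Γ s)) r ⊆ φ.target) :
    ∃ Γ' : ℝ → E, EqOn Γ' Γ (Icc 0 s) ∧ LipschitzOnWith (K * L) Γ' (Icc 0 s') ∧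
      EqOn (p ∘ Γ') γ (Icc 0 s') := by
  subst hφp
  have hγs : γ s = φ (Γ s) := (hΓγ ⟨hs, le_rfl⟩).symm
  have hmaps : MapsTo γ (Icc s s') φ.target := fun t ht => hball <| by
    rw [mem_ball, ← hγs]
    calc dist (γ t) (γ s) ≤ L * dist t s := hγ.dist_le_mul t s
      _ ≤ L * (s' - s) := by
        rw [Real.dist_eq, abs_of_nonneg (by linarith [ht.1])]
        gcongr
        exact ht.2
      _ < r := hr
  set Γ' : ℝ → E := fun t => if t ≤ s then Γ t else φ.symm (γ t)
  have hleft : EqOn Γ' Γ (Icc 0 s) := fun t ht => if_pos ht.2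
  have hright : EqOn Γ' (φ.symm ∘ γ) (Icc s s') := by
    intro t ht
    by_cases hts : t ≤ s
    · obtain rfl : t = s := le_antisymm hts ht.1
      simp [Γ', hγs, φ.left_inv hΓφ]
    · simp [Γ', hts]
  refine ⟨Γ', hleft, (hΓ.congr hleft).Icc_trans ((hφK.comp hγ.lipschitzOnWith hmaps).congr hright),
    fun t ht => ?_⟩
  rcases le_total t s with hts | hst
  · simpa [hleft ⟨ht.1, hts⟩] using hΓγ ⟨ht.1, hts⟩
  · simp [hright ⟨hst, ht.2⟩, φ.right_inv (hmaps ⟨hst, ht.2⟩)]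

theorem exists_lift_Icc [ProperSpace E] (hp : HasLipschitzLocalInverses p K) {γ : ℝ → X}
    {L : ℝ≥0} (hγ : LipschitzWith L γ) {e : E} (he : p e = γ 0) {T : ℝ} (hT : 0 ≤ T) :
    ∃ Γ : ℝ → E, Γ 0 = e ∧ LipschitzOnWith (K * L) Γ (Icc 0 T) ∧ EqOn (p ∘ Γ) γ (Icc 0 T) := by
  -- lifts over `[0, s]` stay in `closedBall e (K * L * T)`, where the local inverses have a
  -- common radius `r`, so they can be continued in steps of length `h`
  obtain ⟨r, hr, hC⟩ := hp.exists_uniform_radius (isCompact_closedBall e (K * L * T))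
  set h := r / (L + 1)
  have hh : 0 < h := by positivity
  have hLh : L * h < r := by
    rw [mul_div_assoc', div_lt_iff₀ (by positivity)]
    linarith
  have step : ∀ k : ℕ, ∀ s ∈ Icc 0 T, s ≤ k * h → ∃ Γ : ℝ → E, Γ 0 = e ∧
      LipschitzOnWith (K * L) Γ (Icc 0 s) ∧ EqOn (p ∘ Γ) γ (Icc 0 s) := by
    intro k
    induction k with
    | zero =>
      rintro s ⟨hs, -⟩ hs0
      obtain rfl : s = 0 := le_antisymm (by simpa using hs0) hs
      exact ⟨fun _ => e, rfl, by simp [LipschitzOnWith], by simp [he]⟩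
    | succ k ih =>
      intro s hs hsk
      by_cases hks : s ≤ k * h
      · exact ih s hs hks
      have hkh : 0 ≤ (k : ℝ) * h := by positivity
      obtain ⟨Γ, hΓe, hΓ, hΓγ⟩ := ih (k * h) ⟨hkh, by linarith [hs.2]⟩ le_rfl
      have hΓk : Γ (k * h) ∈ closedBall e (K * L * T) := by
        rw [mem_closedBall, ← hΓe]
        calc dist (Γ (k * h)) (Γ 0) ≤ K * L * dist ((k : ℝ) * h) 0 :=
              hΓ.dist_le_mul _ ⟨hkh, le_rfl⟩ _ ⟨le_rfl, hkh⟩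
          _ ≤ K * L * T := by
            rw [Real.dist_eq, sub_zero, abs_of_nonneg hkh]
            gcongr
            linarith [hs.2]
      obtain ⟨φ, hΓφ, hφp, hφK, hball⟩ := hC _ hΓk
      have hstep : L * (s - k * h) < r :=
        calc L * (s - k * h) ≤ L * h := by gcongr; push_cast at hsk; linarith
          _ < r := hLh
      obtain ⟨Γ', hΓ'Γ, hΓ', hΓ'γ⟩ := exists_lift_extension hγ hΓ hΓγ hkh (by linarith) hstep φ
        hΓφ hφp hφK hball
      exact ⟨Γ', (hΓ'Γ ⟨le_rfl, hkh⟩).trans hΓe, hΓ', hΓ'γ⟩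
  obtain ⟨k, hk⟩ := exists_nat_ge (T / h)
  exact step k T ⟨hT, le_rfl⟩ ((div_le_iff₀ hh).1 hk)

theorem exists_lift [ProperSpace E] (hp : HasLipschitzLocalInverses p K) {γ : C(I, X)}
    {L : ℝ≥0} (hγ : LipschitzWith L γ) {e : E} (he : p e = γ 0) :
    ∃ Γ : C(I, E), Γ 0 = e ∧ p ∘ Γ = γ ∧ LipschitzWith (K * L) Γ := by
  obtain ⟨Γ, hΓe, hΓ, hΓγ⟩ := hp.exists_lift_Icc (γ := γ ∘ projIcc 0 1 zero_le_one)
    (by simpa using hγ.comp (LipschitzWith.projIcc zero_le_one)) (by simpa using he) zero_le_one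
  have hΓI : LipschitzWith (K * L) fun t : I => Γ t := hΓ.to_restrict
  refine ⟨⟨fun t => Γ t, hΓI.continuous⟩, hΓe, funext fun t => ?_, hΓI⟩
  simpa using hΓγ t.2

end HasLipschitzLocalInverses
end Lifting

def ContinuousMap.HomotopyRel.affine {Y : Type*} [TopologicalSpace Y] [NormedAddCommGroup X]
    [NormedSpace ℝ X] (f g : C(Y, X)) {S : Set Y} (h : EqOn f g S) : f.HomotopyRel g S :=
  { ContinuousMap.Homotopy.affine f g with prop' := fun t x hx => by simp [h hx] }

theorem LipschitzWith.lineMap {Y : Type*} [PseudoEMetricSpace Y] [NormedAddCommGroup X]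
    [NormedSpace ℝ X] {f g : Y → X} {Kf Kg : ℝ≥0} (hf : LipschitzWith Kf f)
    (hg : LipschitzWith Kg g) (t : ℝ) :
    ∃ K, LipschitzWith K fun y => AffineMap.lineMap (f y) (g y) t := by
  set A := (1 - t) • ContinuousLinearMap.fst ℝ X X + t • ContinuousLinearMap.snd ℝ X X
  have hA : (fun y => AffineMap.lineMap (f y) (g y) t) = A ∘ fun y => (f y, g y) := by
    ext y
    simp [A, AffineMap.lineMap_apply_module]
  exact ⟨_, hA ▸ A.lipschitz.comp (hf.prodMk hg)⟩

theorem Path.lipschitzWith_segment [NormedAddCommGroup X] [NormedSpace ℝ X] (x y : X) :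
    LipschitzWith (nndist x y) (Path.segment x y) := by
  have h := (lipschitzWith_lineMap (𝕜 := ℝ) x y).comp (LipschitzWith.subtype_val I)
  rw [mul_one] at h
  exact h

theorem HasLipschitzLocalInverses.antilipschitz [NormedAddCommGroup E] [NormedSpace ℝ E]
    [ProperSpace E] [NormedAddCommGroup X] [NormedSpace ℝ X] {p : E → X} {K : ℝ≥0}
    (hp : HasLipschitzLocalInverses p K) (hp' : LocallyLipschitz p) : AntilipschitzWith K p := by
  refine AntilipschitzWith.of_le_mul_dist fun a b => ?_
  have hsep : IsSeparatedMap p := T2Space.isSeparatedMap p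
  have huniq : ∀ Γ₁ Γ₂ : C(I, E), p ∘ Γ₁ = p ∘ Γ₂ → Γ₁ 0 = Γ₂ 0 → Γ₁ = Γ₂ := fun Γ₁ Γ₂ h h0 =>
    DFunLike.coe_injective (hsep.eq_of_comp_eq hp.isLocalHomeomorph.isLocallyInjective
      Γ₁.continuous Γ₂.continuous h 0 h0)
  let c : C(I, E) := Path.segment a b
  let γ₀ : C(I, X) := (⟨p, hp'.continuous⟩ : C(E, X)).comp c
  let γ₁ : C(I, X) := Path.segment (p a) (p b)
  obtain ⟨Lp, hLp⟩ := hp'.locallyLipschitzOn.exists_lipschitzOnWith_of_compact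
    (isCompact_range c.continuous)
  have hγ₀ : LipschitzWith (Lp * nndist a b) γ₀ := lipschitzOnWith_univ.1 <|
    hLp.comp (Path.lipschitzWith_segment a b).lipschitzOnWith (fun t _ => mem_range_self t)
  let H : γ₀.HomotopyRel γ₁ {0, 1} :=
    .affine γ₀ γ₁ (by rintro t (rfl | rfl) <;> simp [γ₀, γ₁, c])
  have hlift : ∀ t, ∃ Γ : C(I, E), Γ 0 = a ∧ p ∘ Γ = fun s => H (t, s) := by
    intro t
    obtain ⟨L, hL⟩ := hγ₀.lineMap (Path.lipschitzWith_segment (p a) (p b)) t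
    obtain ⟨Γ, hΓa, hΓ, -⟩ := hp.exists_lift (γ := ⟨fun s => H (t, s), by fun_prop⟩) hL
      (e := a) (by simp [H.eq_fst t (.inl rfl), γ₀, c])
    exact ⟨Γ, hΓa, hΓ⟩
  choose Γ hΓa hΓ using hlift
  have hmono := hp.isLocalHomeomorph.monodromy_theorem hsep H Γ (fun t s => congrFun (hΓ t) s)
    (fun t => (hΓa t).trans (hΓa 0).symm) 1
  have hΓ0 : Γ 0 = c :=
    huniq _ _ (by rw [hΓ 0]; ext s; simp [H.apply_zero, γ₀]) ((hΓa 0).trans (by simp [c]))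
  obtain ⟨Λ, hΛa, hΛ, hΛL⟩ :=
    hp.exists_lift (Path.lipschitzWith_segment (p a) (p b)) (e := a) (by simp)
  have hΛ1 : Λ = Γ 1 :=
    huniq _ _ (by rw [hΛ, hΓ 1]; ext s; simp [H.apply_one, γ₁]) (hΛa.trans (hΓa 1).symm)
  calc dist a b = dist (Λ 0) (Λ 1) := by rw [hΛa, hΛ1, hmono, hΓ0]; simp [c]
    _ ≤ K * nndist (p a) (p b) * dist (0 : I) 1 := hΛL.dist_le_mul _ _
    _ = K * dist (p a) (p b) := by simp [Subtype.dist_eq]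

section InverseFunction
variable [NormedAddCommGroup E] [NormedSpace ℝ E] [FiniteDimensional ℝ E] {K : ℝ≥0}

theorem AntilipschitzWith.exists_continuousLinearEquiv {A : E →L[ℝ] E}
    (hA : AntilipschitzWith K A) :
    ∃ e : E ≃L[ℝ] E, (e : E →L[ℝ] E) = A ∧ ‖(e.symm : E →L[ℝ] E)‖₊ ≤ K := by
  set e := (LinearEquiv.ofInjectiveEndo (A : E →ₗ[ℝ] E) hA.injective).toContinuousLinearEquiv
  have he : (e : E →L[ℝ] E) = A := ContinuousLinearMap.ext fun _ => rfl
  refine ⟨e, he, ContinuousLinearMap.opNNNorm_le_bound _ _ fun y => ?_⟩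
  have := hA.le_mul_dist (e.symm y) 0
  rw [← he] at this
  rw [← NNReal.coe_le_coe]
  simpa using this

theorem ContDiff.hasLipschitzLocalInverses {f : E → E} (hf : ContDiff ℝ 1 f)
    (hK : ∀ x, AntilipschitzWith K (fderiv ℝ f x)) : HasLipschitzLocalInverses f K := by
  choose A hA hAK using fun x => (hK x).exists_continuousLinearEquiv
  have hderiv : ∀ x, HasStrictFDerivAt f (A x : E →L[ℝ] E) x := fun x =>
    hA x ▸ hf.contDiffAt.hasStrictFDerivAt one_ne_zero
  intro x
  set φ := (hderiv x).toOpenPartialHomeomorph f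
  obtain ⟨r, hr, hball⟩ :=
    Metric.isOpen_iff.1 φ.open_target (f x) (hderiv x).image_mem_toOpenPartialHomeomorph_target
  refine ⟨(φ.symm.restrOpen (ball (f x) r) (isOpen_ball (x := f x))).symm,
    ⟨(hderiv x).mem_toOpenPartialHomeomorph_source, ?_⟩, rfl, ?_⟩
  · simpa [φ] using mem_ball_self (x := f x) hr
  refine LipschitzOnWith.mono ?_ inter_subset_right
  exact (convex_ball (f x) r).lipschitzOnWith_of_nnnorm_hasFDerivWithin_le
    (f' := fun y => ((A (φ.symm y)).symm : E →L[ℝ] E))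
    (fun y hy => (φ.hasFDerivAt_symm (hball hy) (hderiv _).hasFDerivAt).hasFDerivWithinAt)
    fun y _ => hAK _

end InverseFunction

theorem conorm_mul_norm_le {n : ℕ} (A : EuclideanSpace ℝ (Fin n) →L[ℝ] EuclideanSpace ℝ (Fin n))
    (v : EuclideanSpace ℝ (Fin n)) : conorm A * ‖v‖ ≤ ‖A v‖ := by
  rcases eq_or_ne v 0 with rfl | hv
  · simp
  have hv' : 0 < ‖v‖ := norm_pos_iff.2 hv
  have hle : conorm A ≤ ‖A (‖v‖⁻¹ • v)‖ :=
    csInf_le ⟨0, by rintro _ ⟨w, -, rfl⟩; positivity⟩ ⟨_, by simp [norm_smul, hv'.ne'], rfl⟩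
  rw [map_smul, norm_smul, norm_inv, norm_norm, inv_mul_eq_div, le_div_iff₀ hv'] at hle
  exact hle

theorem antilipschitz_of_le_conorm {n : ℕ}
    {A : EuclideanSpace ℝ (Fin n) →L[ℝ] EuclideanSpace ℝ (Fin n)} {δ : ℝ} (hδ : 0 < δ)
    (h : δ ≤ conorm A) : AntilipschitzWith (Real.toNNReal δ)⁻¹ A :=
  A.antilipschitz_of_bound fun v => by
    rw [NNReal.coe_inv, Real.coe_toNNReal _ hδ.le, ← div_eq_inv_mul, le_div_iff₀' hδ]
    exact (mul_le_mul_of_nonneg_right h (norm_nonneg v)).trans (conorm_mul_norm_le A v)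

theorem expansive_of_conorm_bound {n : ℕ}
    (f : EuclideanSpace ℝ (Fin n) → EuclideanSpace ℝ (Fin n))
    (hf : ContDiff ℝ 1 f) (δ : ℝ) (hδ : 0 < δ)
    (h : ∀ x, δ ≤ conorm (fderiv ℝ f x)) :
    (∀ x x' : EuclideanSpace ℝ (Fin n), δ * ‖x' - x‖ ≤ ‖f x' - f x‖) ∧
    Function.Injective f := by
  have hf' : AntilipschitzWith (Real.toNNReal δ)⁻¹ f :=
    (hf.hasLipschitzLocalInverses fun x => antilipschitz_of_le_conorm hδ (h x)).antilipschitz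
      hf.locallyLipschitz
  refine ⟨fun x x' => ?_, hf'.injective⟩
  have := hf'.le_mul_dist x' x
  rwa [dist_eq_norm, dist_eq_norm, NNReal.coe_inv, Real.coe_toNNReal _ hδ.le, ← div_eq_inv_mul,
    le_div_iff₀' hδ] at this
end

section
/- Let f : ℝ^n → ℝ^n be a C¹ map such that σ(df(x)) ≥ δ > 0 for all x. Then f is a proper map: the preimage of every compact set is compact; equivalently ‖f(x)‖ → ∞ as ‖x‖ → ∞. -/
open Set Metric Filter Topology

variable {E F : Type*} [NormedAddCommGroup E] [NormedAddCommGroup F] [NormedSpace ℝ F]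

theorem IsPreconnected.forall_le_of_le_imp_le {X : Type*} [TopologicalSpace X] {s : Set X}
    (hs : IsPreconnected s) {d : X → ℝ} (hd : ContinuousOn d s) {x₀ : X} (hx₀ : x₀ ∈ s)
    {a b : ℝ} (hab : a < b) (h₀ : d x₀ ≤ a) (hgap : ∀ x ∈ s, d x ≤ b → d x ≤ a) :
    ∀ x ∈ s, d x ≤ a := by
  intro x hx
  by_contra! hxa
  have hxb : b < d x := lt_of_not_ge fun hxb => hxa.not_ge (hgap x hx hxb)
  obtain ⟨y, hy, hyb⟩ := hs.intermediate_value hx₀ hx hd ⟨by linarith, hxb.le⟩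
  linarith [hgap y hy hyb.le]

theorem LipschitzOnWith.Icc_union {E : Type*} [PseudoMetricSpace E] {γ : ℝ → E} {K : NNReal}
    {a b c : ℝ} (h₁ : LipschitzOnWith K γ (Icc a b)) (h₂ : LipschitzOnWith K γ (Icc b c)) :
    LipschitzOnWith K γ (Icc a c) := by
  have key : ∀ s ∈ Icc a c, ∀ t ∈ Icc a c, s ≤ t → dist (γ s) (γ t) ≤ K * dist s t := by
    intro s hs t ht hst
    rcases le_total t b with htb | hbt
    · exact h₁.dist_le_mul s ⟨hs.1, hst.trans htb⟩ t ⟨ht.1, htb⟩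
    rcases le_total s b with hsb | hbs
    · calc dist (γ s) (γ t) ≤ dist (γ s) (γ b) + dist (γ b) (γ t) := dist_triangle _ _ _
        _ ≤ K * dist s b + K * dist b t :=
          add_le_add (h₁.dist_le_mul s ⟨hs.1, hsb⟩ b ⟨hs.1.trans hsb, le_rfl⟩)
            (h₂.dist_le_mul b ⟨le_rfl, hbt.trans ht.2⟩ t ⟨hbt, ht.2⟩)
        _ = K * dist s t := by
          simp only [Real.dist_eq, abs_of_nonpos (sub_nonpos.2 hsb),
            abs_of_nonpos (sub_nonpos.2 hbt), abs_of_nonpos (sub_nonpos.2 hst)]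
          ring
    · exact h₂.dist_le_mul s ⟨hbs, hs.2⟩ t ⟨hbs.trans hst, ht.2⟩
  refine LipschitzOnWith.of_dist_le_mul fun s hs t ht => ?_
  rcases le_total s t with hst | hts
  · exact key s hs t ht hst
  · rw [dist_comm, dist_comm s]
    exact key t ht s hs hts

structure ExpandsClosedBall (f : E → F) (c : ℝ) (p : E) (r : ℝ) : Prop where
  expanding : ∀ u ∈ closedBall p r, ∀ v ∈ closedBall p r, c * ‖u - v‖ ≤ ‖f u - f v‖
  surjOn : SurjOn f (closedBall p r) (closedBall (f p) (c * r))

theorem ExpandsClosedBall.lipschitzOnWith {f : E → F} {c r : ℝ} {p : E}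
    (hp : ExpandsClosedBall f c p r) (hc : 0 < c) {y w : F} {K : NNReal} (hK : ‖w‖ ≤ K * c)
    {S : Set ℝ} {g : ℝ → E} (hg : MapsTo g S (closedBall p r))
    (hgf : ∀ s ∈ S, f (g s) = y + s • w) : LipschitzOnWith K g S := by
  refine LipschitzOnWith.of_dist_le_mul fun s hs s' hs' => ?_
  have h := hp.expanding _ (hg hs) _ (hg hs')
  rw [hgf s hs, hgf s' hs', add_sub_add_left_eq_sub, ← sub_smul, norm_smul,
    Real.norm_eq_abs] at h
  rw [dist_eq_norm, Real.dist_eq]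
  refine le_of_mul_le_mul_left ?_ hc
  calc c * ‖g s - g s'‖ ≤ |s - s'| * ‖w‖ := h
    _ ≤ |s - s'| * (K * c) := by gcongr
    _ = c * (K * |s - s'|) := by ring

def UniformlyLocallyInvertible (f : E → F) (c : ℝ) : Prop :=
  ∀ R, ∃ r > 0, ∀ p ∈ closedBall (0 : E) R, ExpandsClosedBall f c p r

structure IsSegmentLift (f : E → F) (x₀ : E) (w : F) (K : NNReal) (T : ℝ) (γ : ℝ → E) :
    Prop where
  apply_zero : γ 0 = x₀
  apply_eq : ∀ s ∈ Icc 0 T, f (γ s) = f x₀ + s • w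
  lipschitzOnWith : LipschitzOnWith K γ (Icc 0 T)

namespace IsSegmentLift

variable {f : E → F} {x₀ : E} {w : F} {K : NNReal} {T : ℝ} {γ : ℝ → E}

theorem const (f : E → F) (x₀ : E) (w : F) (K : NNReal) :
    IsSegmentLift f x₀ w K 0 (fun _ => x₀) where
  apply_zero := rfl
  apply_eq s hs := by simp [le_antisymm hs.2 hs.1]
  lipschitzOnWith := LipschitzWith.const x₀ |>.lipschitzOnWith.weaken zero_le

theorem dist_apply_le (hγ : IsSegmentLift f x₀ w K T γ) (hT : T ≤ 1) {s : ℝ} (hs : s ∈ Icc 0 T) :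
    dist (γ s) x₀ ≤ K := by
  have h0 : (0 : ℝ) ∈ Icc 0 T := ⟨le_rfl, hs.1.trans hs.2⟩
  calc dist (γ s) x₀ = dist (γ s) (γ 0) := by rw [hγ.apply_zero]
    _ ≤ K * dist s 0 := hγ.lipschitzOnWith.dist_le_mul s hs 0 h0
    _ ≤ K * 1 := by
      gcongr
      rw [Real.dist_eq, sub_zero, abs_of_nonneg hs.1]
      exact hs.2.trans hT
    _ = K := mul_one _

theorem norm_apply_le (hγ : IsSegmentLift f x₀ w K T γ) (hT : T ≤ 1) {s : ℝ}
    (hs : s ∈ Icc 0 T) : ‖γ s‖ ≤ ‖x₀‖ + K := by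
  have h := hγ.dist_apply_le hT hs
  rw [dist_eq_norm] at h
  linarith [norm_le_insert' (γ s) x₀]

theorem extend {c r t : ℝ} (hc : 0 < c) (hK : ‖w‖ ≤ K * c) (hγ : IsSegmentLift f x₀ w K t γ)
    (ht : 0 ≤ t) (hp : ExpandsClosedBall f c (γ t) r) (htT : t ≤ T) (hTr : (T - t) * ‖w‖ ≤ c * r) :
    ∃ γ', IsSegmentLift f x₀ w K T γ' := by
  have hr : 0 ≤ r :=
    (mul_nonneg_iff_of_pos_left hc).1 ((mul_nonneg (sub_nonneg.2 htT) (norm_nonneg w)).trans hTr)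
  have hfγt : f (γ t) = f x₀ + t • w := hγ.apply_eq t ⟨ht, le_rfl⟩
  have htarget : ∀ s ∈ Icc t T, f x₀ + s • w ∈ closedBall (f (γ t)) (c * r) := by
    intro s hs
    rw [mem_closedBall, dist_eq_norm, hfγt, add_sub_add_left_eq_sub, ← sub_smul, norm_smul,
      Real.norm_of_nonneg (sub_nonneg.2 hs.1)]
    exact (mul_le_mul_of_nonneg_right (by linarith [hs.2]) (norm_nonneg w)).trans hTr
  choose! u hu_mem hu_eq using fun s hs => hp.surjOn (htarget s hs)
  set γ' : ℝ → E := fun s => if s ≤ t then γ s else u s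
  have hγ'_mem : ∀ s ∈ Icc t T, γ' s ∈ closedBall (γ t) r := by
    intro s hs
    by_cases hst : s ≤ t
    · simp [γ', le_antisymm hst hs.1, hr]
    · simp only [γ', if_neg hst]; exact hu_mem s hs
  have hγ'_eq : ∀ s ∈ Icc 0 T, f (γ' s) = f x₀ + s • w := by
    intro s hs
    by_cases hst : s ≤ t
    · simp only [γ', if_pos hst]; exact hγ.apply_eq s ⟨hs.1, hst⟩
    · simp only [γ', if_neg hst]; exact hu_eq s ⟨(not_le.1 hst).le, hs.2⟩
  have hlip_left : LipschitzOnWith K γ' (Icc 0 t) := by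
    refine LipschitzOnWith.of_dist_le_mul fun s hs s' hs' => ?_
    simp only [γ', if_pos hs.2, if_pos hs'.2]
    exact hγ.lipschitzOnWith.dist_le_mul s hs s' hs'
  have hlip_right : LipschitzOnWith K γ' (Icc t T) :=
    hp.lipschitzOnWith hc hK hγ'_mem fun s hs => hγ'_eq s ⟨ht.trans hs.1, hs.2⟩
  exact ⟨γ', by simp [γ', ht, hγ.apply_zero], hγ'_eq, hlip_left.Icc_union hlip_right⟩

theorem dist_apply_le_of_dist_le {c r ρ : ℝ} {x₁ x₂ : E} {w₁ w₂ : F} {K₁ K₂ : NNReal}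
    {γ₁ γ₂ : ℝ → E} (h₁ : IsSegmentLift f x₁ w₁ K₁ 1 γ₁) (h₂ : IsSegmentLift f x₂ w₂ K₂ 1 γ₂)
    (hc : 0 < c) (hρr : ρ < r) (hexp : ∀ t ∈ Icc (0 : ℝ) 1, ExpandsClosedBall f c (γ₁ t) r)
    (hx : dist x₁ x₂ ≤ ρ) (hfw : ‖f x₁ - f x₂‖ + ‖w₁ - w₂‖ ≤ c * ρ) :
    ∀ t ∈ Icc (0 : ℝ) 1, dist (γ₁ t) (γ₂ t) ≤ ρ := by
  refine isPreconnected_Icc.forall_le_of_le_imp_le (d := fun t => dist (γ₁ t) (γ₂ t))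
    (continuous_dist.comp_continuousOn
      (h₁.lipschitzOnWith.continuousOn.prodMk h₂.lipschitzOnWith.continuousOn))
    (left_mem_Icc.2 zero_le_one) hρr (by rwa [h₁.apply_zero, h₂.apply_zero]) ?_
  intro t ht hdt
  have hr : 0 ≤ r := dist_nonneg.trans hdt
  have h := (hexp t ht).expanding _ (mem_closedBall_self hr) _
    (by rwa [mem_closedBall, dist_comm])
  rw [h₁.apply_eq t ht, h₂.apply_eq t ht, add_sub_add_comm, ← smul_sub] at h
  refine le_of_mul_le_mul_left ?_ hc
  calc c * dist (γ₁ t) (γ₂ t) ≤ ‖f x₁ - f x₂ + t • (w₁ - w₂)‖ := by rwa [dist_eq_norm]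
    _ ≤ ‖f x₁ - f x₂‖ + t * ‖w₁ - w₂‖ := by
      grw [norm_add_le, norm_smul, Real.norm_of_nonneg ht.1]
    _ ≤ ‖f x₁ - f x₂‖ + 1 * ‖w₁ - w₂‖ := by gcongr; exact ht.2
    _ ≤ c * ρ := by rwa [one_mul]


theorem apply_one_eq_of_dist_le {c r : ℝ} {x₁ x₂ : E} {z : F} {K₁ K₂ : NNReal}
    {γ₁ γ₂ : ℝ → E} (h₁ : IsSegmentLift f x₁ (z - f x₁) K₁ 1 γ₁)
    (h₂ : IsSegmentLift f x₂ (z - f x₂) K₂ 1 γ₂) (hc : 0 < c) (hr : 0 < r)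
    (hexp : ∀ t ∈ Icc (0 : ℝ) 1, ExpandsClosedBall f c (γ₁ t) r)
    (hx : dist x₁ x₂ ≤ r / 2) (hfx : ‖f x₁ - f x₂‖ ≤ c * r / 4) : γ₁ 1 = γ₂ 1 := by
  have h1 : (1 : ℝ) ∈ Icc 0 1 := right_mem_Icc.2 zero_le_one
  have hclose := h₁.dist_apply_le_of_dist_le h₂ hc (half_lt_self hr) hexp hx
    (by rw [sub_sub_sub_cancel_left, norm_sub_rev (f x₂)]; linarith) 1 h1
  have h := (hexp 1 h1).expanding _ (mem_closedBall_self hr.le) _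
    (by rw [mem_closedBall, dist_comm]; linarith)
  rw [h₁.apply_eq 1 h1, h₂.apply_eq 1 h1, one_smul, one_smul, add_sub_cancel, add_sub_cancel,
    sub_self, norm_zero] at h
  exact sub_eq_zero.1 (norm_le_zero_iff.1 (nonpos_of_mul_nonpos_right h hc))

end IsSegmentLift

namespace UniformlyLocallyInvertible

variable {f : E → F} {c : ℝ}

theorem exists_isSegmentLift (hf : UniformlyLocallyInvertible f c) (hc : 0 < c) (x₀ : E) (w : F) :
    ∃ γ, IsSegmentLift f x₀ w (‖w‖ / c).toNNReal 1 γ := by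
  set K := (‖w‖ / c).toNNReal
  have hK : ‖w‖ ≤ K * c := by
    rw [Real.coe_toNNReal _ (by positivity), div_mul_cancel₀ _ hc.ne']
  obtain ⟨r, hr, hball⟩ := hf (‖x₀‖ + K)
  have hexp : ∀ {T γ}, IsSegmentLift f x₀ w K T γ → 0 ≤ T → T ≤ 1 →
      ExpandsClosedBall f c (γ T) r := fun hγ hT0 hT1 =>
    hball _ (mem_closedBall_zero_iff.2 (hγ.norm_apply_le hT1 ⟨hT0, le_rfl⟩))
  set ε := c * r / (‖w‖ + 1)
  have hε : 0 < ε := by positivity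
  have hstep : ε * ‖w‖ ≤ c * r := by
    rw [div_mul_eq_mul_div, div_le_iff₀ (by positivity)]
    nlinarith [mul_pos hc hr, norm_nonneg w]
  have hlift : ∀ k : ℕ, ∃ γ, IsSegmentLift f x₀ w K (min 1 (k * ε)) γ := by
    intro k
    induction k with
    | zero => simpa using ⟨_, IsSegmentLift.const f x₀ w K⟩
    | succ k ih =>
      obtain ⟨γ, hγ⟩ := ih
      have h0 : 0 ≤ min 1 (k * ε) := le_min zero_le_one (by positivity)
      refine hγ.extend hc hK h0 (hexp hγ h0 (min_le_left _ _)) ?_ ?_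
      · gcongr; linarith
      · refine (mul_le_mul_of_nonneg_right ?_ (norm_nonneg w)).trans hstep
        calc min 1 (((k + 1 : ℕ) : ℝ) * ε) - min 1 (k * ε)
            ≤ min (1 + ε) (k * ε + ε) - min 1 (k * ε) := by
              push_cast; gcongr <;> linarith
          _ = ε := by rw [min_add_add_right, add_sub_cancel_left]
  obtain ⟨k, hk⟩ := exists_nat_ge (1 / ε)
  obtain ⟨γ, hγ⟩ := hlift k
  rw [min_eq_left ((div_le_iff₀ hε).1 hk)] at hγ
  exact ⟨γ, hγ⟩

variable [NormedSpace ℝ E]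

theorem injective (hf : UniformlyLocallyInvertible f c) (hc : 0 < c) (hcont : Continuous f) :
    Function.Injective f := by
  intro a b hab
  set σ : ℝ → E := ⇑(AffineMap.lineMap (k := ℝ) a b)
  have hσ : Continuous σ := AffineMap.lineMap_continuous
  choose γ hγ using fun s => hf.exists_isSegmentLift hc (σ s) (f a - f (σ s))
  obtain ⟨R, hR⟩ := isCompact_Icc.bddAbove_image (f := fun s => ‖σ s‖ + ‖f a - f (σ s)‖ / c)
    (by fun_prop : Continuous fun s => ‖σ s‖ + ‖f a - f (σ s)‖ / c).continuousOn
  obtain ⟨r, hr, hball⟩ := hf R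
  have hexp : ∀ s ∈ Icc (0 : ℝ) 1, ∀ t ∈ Icc (0 : ℝ) 1, ExpandsClosedBall f c (γ s t) r := by
    intro s hs t ht
    refine hball _ (mem_closedBall_zero_iff.2 ?_)
    calc ‖γ s t‖ ≤ ‖σ s‖ + ‖f a - f (σ s)‖ / c := by
          grw [(hγ s).norm_apply_le le_rfl ht, Real.coe_toNNReal _ (by positivity)]
      _ ≤ R := hR (mem_image_of_mem _ hs)
  have hlocal : ∀ s ∈ Icc (0 : ℝ) 1, ∀ᶠ s' in 𝓝[Icc 0 1] s, γ s 1 = γ s' 1 := by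
    intro s hs
    have hσs : ∀ᶠ s' in 𝓝 s, dist (σ s) (σ s') ≤ r / 2 := by
      simpa only [dist_comm (σ s)] using
        (hσ.tendsto s).eventually (closedBall_mem_nhds _ (half_pos hr))
    have hfσs : ∀ᶠ s' in 𝓝 s, ‖f (σ s) - f (σ s')‖ ≤ c * r / 4 := by
      simpa only [← dist_eq_norm, dist_comm (f (σ s)), Function.comp_apply] using
        ((hcont.comp hσ).tendsto s).eventually (closedBall_mem_nhds _ (by positivity))
    filter_upwards [nhdsWithin_le_nhds (hσs.and hfσs)] with s' ⟨h₁, h₂⟩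
    exact (hγ s).apply_one_eq_of_dist_le (hγ s') hc hr (hexp s hs) h₁ h₂
  have hends := isPreconnected_Icc.induction₂ (fun s s' => γ s 1 = γ s' 1) hlocal
    (fun _ _ _ _ _ _ => Eq.trans) (fun _ _ _ _ => Eq.symm) (left_mem_Icc.2 zero_le_one)
    (right_mem_Icc.2 zero_le_one)
  have hstart : ∀ s, f (σ s) = f a → γ s 1 = σ s := fun s hs => by
    simpa [hs] using (hγ s).dist_apply_le le_rfl ⟨zero_le_one, le_rfl⟩
  simpa [σ, hstart 0 (by simp [σ]), hstart 1 (by simp [σ, hab])] using hends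

theorem antilipschitzWith (hf : UniformlyLocallyInvertible f c) (hc : 0 < c)
    (hcont : Continuous f) : AntilipschitzWith c.toNNReal⁻¹ f := by
  refine AntilipschitzWith.of_le_mul_dist fun a b => ?_
  obtain ⟨γ, hγ⟩ := hf.exists_isSegmentLift hc b (f a - f b)
  have hγa : γ 1 = a := hf.injective hc hcont <| by
    rw [hγ.apply_eq 1 ⟨zero_le_one, le_rfl⟩, one_smul, add_sub_cancel]
  have h := hγ.dist_apply_le le_rfl ⟨zero_le_one, le_rfl⟩
  rw [hγa, Real.coe_toNNReal _ (by positivity), ← dist_eq_norm] at h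
  rwa [NNReal.coe_inv, Real.coe_toNNReal _ hc.le, inv_mul_eq_div]

end UniformlyLocallyInvertible

section Differentiable

variable [NormedSpace ℝ E]

theorem ContDiff.exists_forall_approximatesLinearOn_closedBall [ProperSpace E] {f : E → F}
    (hf : ContDiff ℝ 1 f) (R : ℝ) {ε : NNReal} (hε : 0 < ε) :
    ∃ r > 0, ∀ p ∈ closedBall (0 : E) R,
      ApproximatesLinearOn f (fderiv ℝ f p) (closedBall p r) ε := by
  obtain ⟨d, hd, hdf⟩ := Metric.uniformContinuousOn_iff.1
    ((isCompact_closedBall (0 : E) (R + 1)).uniformContinuousOn_of_continuous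
      (hf.continuous_fderiv one_ne_zero).continuousOn) ε hε
  refine ⟨min (d / 2) 1, by positivity, fun p hp => ?_⟩
  have hsub : closedBall p (min (d / 2) 1) ⊆ closedBall 0 (R + 1) :=
    closedBall_subset_closedBall' (by linarith [min_le_right (d / 2) 1, mem_closedBall.1 hp])
  intro u hu v hv
  refine (convex_closedBall p _).norm_image_sub_le_of_norm_fderiv_le'
    (fun x _ => (hf.differentiable one_ne_zero) x) (fun x hx => ?_) hv hu
  rw [← dist_eq_norm]
  refine (hdf x (hsub hx) p (hsub (mem_closedBall_self (by positivity))) ?_).le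
  linarith [mem_closedBall.1 hx, min_le_left (d / 2) 1]

theorem ApproximatesLinearOn.sub_mul_norm_sub_le {f : E → F} {A : E →L[ℝ] F} {s : Set E}
    {ε : NNReal} {δ : ℝ} (hf : ApproximatesLinearOn f A s ε) (hA : ∀ v, δ * ‖v‖ ≤ ‖A v‖)
    {u v : E} (hu : u ∈ s) (hv : v ∈ s) : (δ - ε) * ‖u - v‖ ≤ ‖f u - f v‖ := by
  have happrox := hf u hu v hv
  have hsub := norm_sub_le (f u - f v) (f u - f v - A (u - v))
  rw [sub_sub_cancel] at hsub
  linarith [hA (u - v)]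

noncomputable def ContinuousLinearMap.nonlinearRightInverseOfLowerBound [FiniteDimensional ℝ E]
    (A : E →L[ℝ] E) {δ : ℝ} (hδ : 0 < δ) (hA : ∀ v, δ * ‖v‖ ≤ ‖A v‖) :
    A.NonlinearRightInverse :=
  have hsurj : Function.Surjective A := LinearMap.injective_iff_surjective.1 <|
    (injective_iff_map_eq_zero A).2 fun v hv =>
      norm_le_zero_iff.1 (nonpos_of_mul_nonpos_right (by simpa [hv] using hA v) hδ)
  { toFun := fun y => (hsurj y).choose
    nnnorm := δ⁻¹.toNNReal
    bound' := fun y => by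
      rw [Real.coe_toNNReal _ (by positivity), inv_mul_eq_div, le_div_iff₀' hδ]
      simpa [(hsurj y).choose_spec] using hA (hsurj y).choose
    right_inv' := fun y => (hsurj y).choose_spec }

theorem ContDiff.uniformlyLocallyInvertible [FiniteDimensional ℝ E] {f : E → E}
    (hf : ContDiff ℝ 1 f) {δ : ℝ} (hδ : 0 < δ) (h : ∀ x v, δ * ‖v‖ ≤ ‖fderiv ℝ f x v‖) :
    UniformlyLocallyInvertible f (δ / 2) := by
  intro R
  have hε : ((δ / 2).toNNReal : ℝ) = δ / 2 := Real.coe_toNNReal _ (by positivity)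
  obtain ⟨r, hr, happrox⟩ :=
    hf.exists_forall_approximatesLinearOn_closedBall R (ε := (δ / 2).toNNReal) (by simpa using hδ)
  refine ⟨r, hr, fun p hp => ⟨fun u hu v hv => ?_, ?_⟩⟩
  · have := (happrox p hp).sub_mul_norm_sub_le (h p) hu hv
    rwa [hε, sub_half] at this
  · convert (happrox p hp).surjOn_closedBall_of_nonlinearRightInverse
      ((fderiv ℝ f p).nonlinearRightInverseOfLowerBound hδ (h p)) hr.le subset_rfl using 3
    simp [ContinuousLinearMap.nonlinearRightInverseOfLowerBound, hε, hδ.le, sub_half]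

end Differentiable

theorem mul_norm_le_of_le_conorm {n : ℕ}
    {A : EuclideanSpace ℝ (Fin n) →L[ℝ] EuclideanSpace ℝ (Fin n)} {δ : ℝ} (hA : δ ≤ conorm A)
    (v : EuclideanSpace ℝ (Fin n)) : δ * ‖v‖ ≤ ‖A v‖ := by
  rcases eq_or_ne v 0 with rfl | hv
  · simp
  have hv' : 0 < ‖v‖ := norm_pos_iff.2 hv
  have hunit : ‖A (‖v‖⁻¹ • v)‖ ∈ {y : ℝ | ∃ u : EuclideanSpace ℝ (Fin n), ‖u‖ = 1 ∧ y = ‖A u‖} :=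
    ⟨‖v‖⁻¹ • v, by rw [norm_smul, norm_inv, norm_norm, inv_mul_cancel₀ hv'.ne'], rfl⟩
  have hle : δ ≤ ‖v‖⁻¹ * ‖A v‖ := by
    simpa [norm_smul] using hA.trans (csInf_le ⟨0, by rintro y ⟨u, -, rfl⟩; positivity⟩ hunit)
  calc δ * ‖v‖ ≤ ‖v‖⁻¹ * ‖A v‖ * ‖v‖ := by gcongr
    _ = ‖A v‖ := by field_simp

theorem proper_of_conorm_bound {n : ℕ}
    (f : EuclideanSpace ℝ (Fin n) → EuclideanSpace ℝ (Fin n))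
    (hf : ContDiff ℝ 1 f) (δ : ℝ) (hδ : 0 < δ)
    (h : ∀ x, δ ≤ conorm (fderiv ℝ f x)) :
    (∀ K : Set (EuclideanSpace ℝ (Fin n)), IsCompact K → IsCompact (f ⁻¹' K)) ∧
    Filter.Tendsto (fun x => ‖f x‖) (Filter.cocompact _) Filter.atTop := by
  have hanti : AntilipschitzWith (δ / 2).toNNReal⁻¹ f :=
    (hf.uniformlyLocallyInvertible hδ fun x => mul_norm_le_of_le_conorm (h x)).antilipschitzWith
      (half_pos hδ) hf.continuous
  refine ⟨fun K hK => ?_, ?_⟩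
  · exact isCompact_of_isClosed_isBounded (hK.isClosed.preimage hf.continuous)
      (hanti.isBounded_preimage hK.isBounded)
  · rw [← cobounded_eq_cocompact]
    exact tendsto_norm_cobounded_atTop.comp hanti.tendsto_cobounded
end

section
/- (Hadamard) Let f : ℝ^n → ℝ^n be a C¹ map such that σ(df(x)) ≥ δ for all x ∈ ℝ^n, for some fixed δ > 0. Then f is a global homeomorphism of ℝ^n onto ℝ^n. -/
/-!
If `‖df(x) v‖ ≥ δ ‖v‖` everywhere, the quantitative inverse function theorem gives local inverses
of `f` that are `2/δ`-Lipschitz and defined on balls whose radius is uniform on compact sets.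
A `K`-Lipschitz path `q` starting at `f a` therefore lifts through `f` to a path starting at `a`:
the lift moves at speed at most `2K/δ`, so it stays in a fixed compact ball, and it can be
continued by steps of uniform length. Lifting segments gives surjectivity. If `f a = f b`, the
straight-line homotopy contracts the loop `f ∘ [a, b]` to the constant loop through Lipschitz
loops, all of which lift from `a`; by the monodromy theorem the lifts of the two extreme loops end
at the same point, and these endpoints are `b` and `a`.
-/

open Set Function Metric AffineMap
open scoped NNReal unitInterval

theorem mul_norm_le_norm_apply_of_le_conorm {n : ℕ}
    {A : EuclideanSpace ℝ (Fin n) →L[ℝ] EuclideanSpace ℝ (Fin n)} {δ : ℝ} (h : δ ≤ conorm A)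
    (v : EuclideanSpace ℝ (Fin n)) : δ * ‖v‖ ≤ ‖A v‖ := by
  rcases eq_or_ne v 0 with rfl | hv
  · simp
  have hv : 0 < ‖v‖ := norm_pos_iff.mpr hv
  have hunit : ‖‖v‖⁻¹ • v‖ = 1 := by rw [norm_smul, norm_inv, norm_norm, inv_mul_cancel₀ hv.ne']
  have hle : δ ≤ ‖v‖⁻¹ * ‖A v‖ := by
    refine h.trans (csInf_le ⟨0, ?_⟩ ⟨_, hunit, by rw [map_smul, norm_smul, norm_inv, norm_norm]⟩)
    rintro _ ⟨w, -, rfl⟩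
    exact norm_nonneg _
  rwa [inv_mul_eq_div, le_div_iff₀ hv] at hle

theorem Real.induction_of_uniform_step {P : ℝ → Prop} {η : ℝ} (hη : 0 < η) (h₀ : P 0)
    (hstep : ∀ t t', 0 ≤ t → t ≤ t' → t' ≤ 1 → t' ≤ t + η → P t → P t') : P 1 := by
  have hP : ∀ k : ℕ, P (min (k * η) 1) := by
    intro k
    induction k with
    | zero => simpa using h₀
    | succ k ih =>
      refine hstep _ _ (by positivity) (min_le_min (by push_cast; linarith) le_rfl)
        (min_le_right _ _) ?_ ih
      calc min ((k + 1 : ℕ) * η) 1 ≤ min (k * η + η) (1 + η) :=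
            min_le_min (by push_cast; linarith) (by linarith)
        _ = min (k * η) 1 + η := min_add_add_right _ _ _
  obtain ⟨k, hk⟩ := exists_nat_ge (1 / η)
  simpa [min_eq_right (by rwa [div_le_iff₀ hη] at hk : 1 ≤ k * η)] using hP k

theorem LipschitzOnWith.congr_s11 {X Y : Type*} [PseudoEMetricSpace X] [PseudoEMetricSpace Y]
    {K : ℝ≥0} {s : Set X} {g₁ g₂ : X → Y} (h : LipschitzOnWith K g₁ s) (heq : EqOn g₁ g₂ s) :
    LipschitzOnWith K g₂ s := fun x hx y hy => by
  rw [← heq hx, ← heq hy]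
  exact h hx hy

theorem LipschitzOnWith.Icc_union_Icc {Y : Type*} [PseudoMetricSpace Y] {K : ℝ≥0} {g : ℝ → Y}
    {a b c : ℝ} (h₁ : LipschitzOnWith K g (Icc a b)) (h₂ : LipschitzOnWith K g (Icc b c)) :
    LipschitzOnWith K g (Icc a c) := by
  refine LipschitzOnWith.of_dist_le_mul fun x hx y hy => ?_
  wlog hxy : x ≤ y generalizing x y
  · rw [dist_comm, dist_comm x]
    exact this y hy x hx (le_of_not_ge hxy)
  rcases le_total y b with hyb | hby
  · exact h₁.dist_le_mul x ⟨hx.1, hxy.trans hyb⟩ y ⟨hy.1, hyb⟩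
  rcases le_total b x with hbx | hxb
  · exact h₂.dist_le_mul x ⟨hbx, hx.2⟩ y ⟨hbx.trans hxy, hy.2⟩
  calc dist (g x) (g y) ≤ dist (g x) (g b) + dist (g b) (g y) := dist_triangle _ _ _
    _ ≤ K * dist x b + K * dist b y :=
        add_le_add (h₁.dist_le_mul x ⟨hx.1, hxb⟩ b ⟨hx.1.trans hxb, le_rfl⟩)
          (h₂.dist_le_mul b ⟨le_rfl, hby.trans hy.2⟩ y ⟨hby, hy.2⟩)
    _ = K * dist x y := by
        rw [Real.dist_eq, Real.dist_eq, Real.dist_eq, abs_of_nonpos (by linarith),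
          abs_of_nonpos (by linarith), abs_of_nonpos (by linarith)]
        ring

theorem IsCompact.exists_pos_forall_dist_lt {X Y : Type*} [PseudoMetricSpace X]
    [PseudoMetricSpace Y] {K : Set X} (hK : IsCompact K) {g : X → Y} (hg : Continuous g) {ε : ℝ}
    (hε : 0 < ε) : ∃ ρ > 0, ∀ x ∈ K, ∀ z ∈ ball x ρ, dist (g z) (g x) < ε := by
  obtain ⟨ρ, hρ, h⟩ := mem_uniformity_dist.mp <|
    hK.uniformContinuousAt_of_continuousAt g (fun x _ => hg.continuousAt) (dist_mem_uniformity hε)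
  refine ⟨ρ, hρ, fun x hx z hz => ?_⟩
  rw [dist_comm]
  exact h (mem_ball'.mp hz) hx

theorem OpenPartialHomeomorph.lipschitzOnWith_symm {X Y : Type*} [PseudoMetricSpace X]
    [PseudoMetricSpace Y] (φ : OpenPartialHomeomorph X Y) {c : ℝ≥0} (hc : 0 < c)
    (h : ∀ u ∈ φ.source, ∀ u' ∈ φ.source, c * dist u u' ≤ dist (φ u) (φ u')) :
    LipschitzOnWith c⁻¹ φ.symm φ.target := by
  refine LipschitzOnWith.of_dist_le_mul fun y hy y' hy' => ?_
  have h' := h _ (φ.map_target hy) _ (φ.map_target hy')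
  rw [φ.right_inv hy, φ.right_inv hy'] at h'
  rwa [NNReal.coe_inv, inv_mul_eq_div, le_div_iff₀' (by positivity)]

theorem OpenPartialHomeomorph.exists_lift_extend {X Y : Type*} [PseudoMetricSpace X]
    [PseudoMetricSpace Y] (φ : OpenPartialHomeomorph X Y) {Kφ K : ℝ≥0}
    (hφ : LipschitzOnWith Kφ φ.symm φ.target) {q : ℝ → Y} {γ : ℝ → X} {t t' : ℝ} (ht : 0 ≤ t)
    (hγ : LipschitzOnWith (Kφ * K) γ (Icc 0 t)) (hγq : EqOn (φ ∘ γ) q (Icc 0 t))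
    (hsrc : γ t ∈ φ.source) (hq : LipschitzOnWith K q (Icc t t'))
    (hmaps : MapsTo q (Icc t t') φ.target) :
    ∃ γ' : ℝ → X, LipschitzOnWith (Kφ * K) γ' (Icc 0 t') ∧ γ' 0 = γ 0 ∧
      EqOn (φ ∘ γ') q (Icc 0 t') := by
  refine ⟨fun s => if s ≤ t then γ s else φ.symm (q s), ?_, if_pos ht, fun s hs => ?_⟩
  · refine (hγ.congr_s11 fun s hs => (if_pos hs.2).symm).Icc_union_Icc
      ((hφ.comp hq hmaps).congr_s11 fun s hs => ?_)
    split_ifs with hst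
    · obtain rfl : s = t := le_antisymm hst hs.1
      rw [comp_apply, ← hγq ⟨ht, le_rfl⟩, comp_apply, φ.left_inv hsrc]
    · rfl
  · by_cases hst : s ≤ t
    · simpa [hst] using hγq ⟨hs.1, hst⟩
    · simpa [hst] using φ.right_inv (hmaps ⟨le_of_not_ge hst, hs.2⟩)

section ApproximatesLinearOn

variable {E F : Type*} [NormedAddCommGroup E] [NormedSpace ℝ E]
  [NormedAddCommGroup F] [NormedSpace ℝ F]

theorem ContinuousLinearMap.exists_equiv_of_mul_norm_le [FiniteDimensional ℝ E]
    {A : E →L[ℝ] E} {δ : ℝ≥0} (hδ : 0 < δ) (hA : ∀ v, δ * ‖v‖ ≤ ‖A v‖) :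
    ∃ A' : E ≃L[ℝ] E, (A' : E →L[ℝ] E) = A ∧ ‖(A'.symm : E →L[ℝ] E)‖₊ ≤ δ⁻¹ := by
  have hinj : Injective A := fun v w hvw => by
    have := hA (v - w)
    rw [map_sub, hvw, sub_self, norm_zero] at this
    exact sub_eq_zero.mp (norm_le_zero_iff.mp (nonpos_of_mul_nonpos_right this (by positivity)))
  let A' := (LinearEquiv.ofInjectiveEndo (A : E →ₗ[ℝ] E) hinj).toContinuousLinearEquiv
  refine ⟨A', rfl, ?_⟩
  rw [← NNReal.coe_le_coe, coe_nnnorm, NNReal.coe_inv]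
  refine ContinuousLinearMap.opNorm_le_bound _ (by positivity) fun w => ?_
  rw [inv_mul_eq_div, le_div_iff₀' (by positivity)]
  have h := hA (A'.symm w)
  rwa [show A (A'.symm w) = w from A'.apply_symm_apply w] at h

theorem ApproximatesLinearOn.sub_mul_dist_le {f : E → F} {A : E →L[ℝ] F} {s : Set E}
    {c : ℝ≥0} {δ : ℝ} (hf : ApproximatesLinearOn f A s c) (hA : ∀ v, δ * ‖v‖ ≤ ‖A v‖)
    {u u' : E} (hu : u ∈ s) (hu' : u' ∈ s) : (δ - c) * dist u u' ≤ dist (f u) (f u') := by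
  have h₁ := hf u hu u' hu'
  have h₂ := hA (u - u')
  have h₃ := norm_sub_norm_le (A (u - u')) (f u - f u')
  rw [norm_sub_rev (A _)] at h₃
  rw [dist_eq_norm, dist_eq_norm]
  nlinarith

theorem ApproximatesLinearOn.closedBall_subset_image [CompleteSpace E] {f : E → F} {A : E ≃L[ℝ] F}
    {s : Set E} {c δ : ℝ≥0} (hf : ApproximatesLinearOn f (A : E →L[ℝ] F) s c)
    (hA : ‖(A.symm : F →L[ℝ] E)‖₊ ≤ δ⁻¹) {b : E} {ε : ℝ} (hε : 0 ≤ ε) (hbs : closedBall b ε ⊆ s) :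
    closedBall (f b) ((δ - c) * ε) ⊆ f '' closedBall b ε := by
  let Ainv : (A : E →L[ℝ] F).NonlinearRightInverse :=
    { toFun := A.symm
      nnnorm := δ⁻¹
      bound' := fun y => ((A.symm : F →L[ℝ] E).le_opNorm y).trans
        (mul_le_mul_of_nonneg_right (by exact_mod_cast hA) (norm_nonneg y))
      right_inv' := A.apply_symm_apply }
  simpa [Ainv, SurjOn] using hf.surjOn_closedBall_of_nonlinearRightInverse Ainv hε hbs

end ApproximatesLinearOn

section Hadamard

variable {E : Type*} [NormedAddCommGroup E] [NormedSpace ℝ E] [FiniteDimensional ℝ E]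
  {f : E → E} {δ : ℝ≥0}

theorem exists_uniform_localInverse (hf : ContDiff ℝ 1 f) (hδ : 0 < δ)
    (hbound : ∀ x v, δ * ‖v‖ ≤ ‖fderiv ℝ f x v‖) {K : Set E} (hK : IsCompact K) :
    ∃ r > 0, ∀ x ∈ K, ∃ φ : OpenPartialHomeomorph E E, ⇑φ = f ∧ x ∈ φ.source ∧
      ball (f x) r ⊆ φ.target ∧ LipschitzOnWith (2 / δ) φ.symm φ.target := by
  obtain ⟨ρ, hρ, hclose⟩ := hK.exists_pos_forall_dist_lt (hf.continuous_fderiv one_ne_zero)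
    (by positivity : (0 : ℝ) < δ / 2)
  refine ⟨δ / 2 * (ρ / 2), by positivity, fun x hx => ?_⟩
  obtain ⟨A, hAf, hAsymm⟩ := (fderiv ℝ f x).exists_equiv_of_mul_norm_le hδ (hbound x)
  have happrox : ApproximatesLinearOn f (A : E →L[ℝ] E) (ball x ρ) (δ / 2) := by
    intro u hu u' hu'
    rw [hAf]
    push_cast
    refine (convex_ball x ρ).norm_image_sub_le_of_norm_fderiv_le'
      (fun z _ => hf.differentiable one_ne_zero z) (fun z hz => ?_) hu' hu
    rw [← dist_eq_norm]
    exact (hclose x hx z hz).le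
  have hc : Subsingleton E ∨ δ / 2 < ‖(A.symm : E →L[ℝ] E)‖₊⁻¹ :=
    A.subsingleton_or_nnnorm_symm_pos.imp_right fun hpos =>
      (NNReal.half_lt_self hδ.ne').trans_le (by simpa using inv_anti₀ hpos hAsymm)
  have hhalf : (δ : ℝ) - (δ / 2 : ℝ≥0) = (δ / 2 : ℝ≥0) := by push_cast; ring
  have hρ₂ : closedBall x (ρ / 2) ⊆ ball x ρ := closedBall_subset_ball (half_lt_self hρ)
  set φ := happrox.toOpenPartialHomeomorph f (ball x ρ) hc isOpen_ball
  refine ⟨φ, rfl, mem_ball_self hρ, ?_, ?_⟩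
  · calc ball (f x) (δ / 2 * (ρ / 2)) ⊆ closedBall (f x) ((δ - (δ / 2 : ℝ≥0)) * (ρ / 2)) := by
          rw [hhalf]
          push_cast
          exact ball_subset_closedBall
      _ ⊆ f '' closedBall x (ρ / 2) :=
          happrox.closedBall_subset_image hAsymm (by positivity) hρ₂
      _ ⊆ φ.target := image_mono hρ₂
  · rw [← inv_div]
    exact φ.lipschitzOnWith_symm (by positivity) fun u hu u' hu' =>
      hhalf ▸ happrox.sub_mul_dist_le (hAf ▸ hbound x) hu hu'

theorem isLocalHomeomorph_of_mul_norm_le_fderiv (hf : ContDiff ℝ 1 f) (hδ : 0 < δ)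
    (hbound : ∀ x v, δ * ‖v‖ ≤ ‖fderiv ℝ f x v‖) : IsLocalHomeomorph f := fun x => by
  obtain ⟨r, -, hloc⟩ := exists_uniform_localInverse hf hδ hbound (isCompact_singleton (x := x))
  obtain ⟨φ, hφ, hx, -⟩ := hloc x rfl
  exact ⟨φ, hx, hφ.symm⟩

theorem exists_lift_of_lipschitzOnWith (hf : ContDiff ℝ 1 f) (hδ : 0 < δ)
    (hbound : ∀ x v, δ * ‖v‖ ≤ ‖fderiv ℝ f x v‖) {q : ℝ → E} {K : ℝ≥0}
    (hq : LipschitzOnWith K q (Icc 0 1)) {a : E} (ha : f a = q 0) :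
    ∃ Γ : C(I, E), Γ 0 = a ∧ ∀ s : I, f (Γ s) = q s := by
  obtain ⟨r, hr, hloc⟩ :=
    exists_uniform_localInverse hf hδ hbound (isCompact_closedBall a (2 / δ * K))
  have hKη : K * (r / (K + 1)) < r := by
    rw [mul_div_assoc', div_lt_iff₀ (by positivity)]
    nlinarith
  let IsLiftOn (t : ℝ) : Prop := ∃ γ : ℝ → E, LipschitzOnWith (2 / δ * K) γ (Icc 0 t) ∧
    γ 0 = a ∧ EqOn (f ∘ γ) q (Icc 0 t)
  obtain ⟨γ, hγ, hγ0, hγq⟩ : IsLiftOn 1 := by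
    refine Real.induction_of_uniform_step (P := IsLiftOn) (η := r / (K + 1)) (by positivity)
      ⟨fun _ => a, (LipschitzWith.const a).lipschitzOnWith.weaken zero_le, rfl, fun s hs => ?_⟩
      fun t t' ht htt' ht' hη ⟨γ, hγ, hγ0, hγq⟩ => ?_
    · obtain rfl : s = 0 := le_antisymm hs.2 hs.1
      exact ha
    have hγt : γ t ∈ closedBall a (2 / δ * K) := by
      rw [mem_closedBall, ← hγ0]
      refine (hγ.dist_le_mul t ⟨ht, le_rfl⟩ 0 ⟨le_rfl, ht⟩).trans ?_
      rw [Real.dist_eq, sub_zero, abs_of_nonneg ht]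
      exact mul_le_of_le_one_right (by positivity) (htt'.trans ht')
    obtain ⟨φ, rfl, hsrc, hball, hφ⟩ := hloc _ hγt
    have hmaps : MapsTo q (Icc t t') φ.target := fun s hs => hball <| by
      rw [mem_ball, show φ (γ t) = q t from hγq ⟨ht, le_rfl⟩]
      calc dist (q s) (q t) ≤ K * dist s t :=
            hq.dist_le_mul s ⟨ht.trans hs.1, hs.2.trans ht'⟩ t ⟨ht, htt'.trans ht'⟩
        _ ≤ K * (r / (K + 1)) := by
            rw [Real.dist_eq, abs_of_nonneg (by linarith [hs.1])]
            exact mul_le_mul_of_nonneg_left (by linarith [hs.2]) K.2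
        _ < r := hKη
    obtain ⟨γ', hγ', hγ'0, hγ'q⟩ :=
      φ.exists_lift_extend hφ ht hγ hγq hsrc (hq.mono (Icc_subset_Icc ht ht')) hmaps
    exact ⟨γ', hγ', hγ'0.trans hγ0, hγ'q⟩
  exact ⟨⟨fun s => γ s, hγ.continuousOn.comp_continuous continuous_subtype_val Subtype.prop⟩,
    hγ0, fun s => hγq s.2⟩

theorem surjective_of_mul_norm_le_fderiv (hf : ContDiff ℝ 1 f) (hδ : 0 < δ)
    (hbound : ∀ x v, δ * ‖v‖ ≤ ‖fderiv ℝ f x v‖) : Surjective f := fun y => by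
  obtain ⟨Γ, -, hΓ⟩ := exists_lift_of_lipschitzOnWith hf hδ hbound
    (lipschitzWith_lineMap (f 0) y).lipschitzOnWith (a := 0) (by simp)
  exact ⟨Γ 1, by simpa using hΓ 1⟩

theorem injective_of_mul_norm_le_fderiv (hf : ContDiff ℝ 1 f) (hδ : 0 < δ)
    (hbound : ∀ x v, δ * ‖v‖ ≤ ‖fderiv ℝ f x v‖) : Injective f := by
  intro a b hab
  have homeo := isLocalHomeomorph_of_mul_norm_le_fderiv hf hδ hbound
  have sep := T2Space.isSeparatedMap f
  let L : C(I, E) := ⟨fun s => lineMap a b (s : ℝ), by fun_prop⟩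
  let H : (ContinuousMap.const I (f a)).HomotopyRel ((⟨f, hf.continuous⟩ : C(E, E)).comp L)
      {0, 1} :=
    { ContinuousMap.Homotopy.affine _ _ with
      prop' := by rintro t s (rfl | rfl) <;> simp [L, hab] }
  -- `H` on all of `ℝ × ℝ`: being `C¹`, it is Lipschitz on the unit square, so every slice lifts.
  let F : ℝ × ℝ → E := fun p => lineMap (f a) (f (lineMap a b p.2)) p.1
  have hF : ContDiff ℝ 1 F := by
    simp only [F, lineMap_apply_module]
    fun_prop
  obtain ⟨K, hK⟩ := hF.locallyLipschitz.locallyLipschitzOn.exists_lipschitzOnWith_of_compact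
    (isCompact_Icc.prod (isCompact_Icc (a := (0 : ℝ)) (b := 1)))
  choose Γ hΓ0 hΓ using fun t : I => exists_lift_of_lipschitzOnWith hf hδ hbound
    (hK.comp (LipschitzWith.prodMk_left (t : ℝ)).lipschitzOnWith fun s hs => ⟨t.2, hs⟩)
    (a := a) (by simp [F])
  have hmono := homeo.monodromy_theorem sep H Γ hΓ (fun t => (hΓ0 t).trans (hΓ0 0).symm) 1
  have hΓ1 : ⇑(Γ 1) = L := sep.eq_of_comp_eq homeo.isLocallyInjective (Γ 1).continuous
    L.continuous (funext fun s => by simpa [F, L] using hΓ 1 s) 0 (by simpa [L] using hΓ0 1)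
  have hΓ0' : ⇑(Γ 0) = fun _ => a := sep.eq_of_comp_eq homeo.isLocallyInjective
    (Γ 0).continuous continuous_const (funext fun s => by simpa [F] using hΓ 0 s) 0 (hΓ0 0)
  calc a = Γ 0 1 := (congrFun hΓ0' 1).symm
    _ = Γ 1 1 := hmono.symm
    _ = b := by simp [hΓ1, L]

theorem exists_homeomorph_of_mul_norm_le_fderiv (hf : ContDiff ℝ 1 f) (hδ : 0 < δ)
    (hbound : ∀ x v, δ * ‖v‖ ≤ ‖fderiv ℝ f x v‖) : ∃ g : E ≃ₜ E, ⇑g = f :=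
  ⟨(Equiv.ofBijective f ⟨injective_of_mul_norm_le_fderiv hf hδ hbound,
    surjective_of_mul_norm_le_fderiv hf hδ hbound⟩).toHomeomorphOfContinuousOpen hf.continuous
    (isLocalHomeomorph_of_mul_norm_le_fderiv hf hδ hbound).isOpenMap, rfl⟩

end Hadamard

theorem hadamard_global_homeomorphism {n : ℕ}
    (f : EuclideanSpace ℝ (Fin n) → EuclideanSpace ℝ (Fin n))
    (hf : ContDiff ℝ 1 f) (δ : ℝ) (hδ : 0 < δ)
    (h : ∀ x, δ ≤ conorm (fderiv ℝ f x)) :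
    ∃ g : EuclideanSpace ℝ (Fin n) ≃ₜ EuclideanSpace ℝ (Fin n), ∀ x, g x = f x := by
  obtain ⟨g, hg⟩ := exists_homeomorph_of_mul_norm_le_fderiv (δ := ⟨δ, hδ.le⟩) hf hδ
    fun x => mul_norm_le_norm_apply_of_le_conorm (h x)
  exact ⟨g, congrFun hg⟩
end
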